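/- Let X1 = λ1·R1 + λ2·R2 + λ3·R3 + λ4·R4 and X2 = λ1·R1 + λ2·R2 + λ3·R3' + λ4·R4', where R1, R2, R3, R3', R4, R4' are independent standard exponentials and λ1, λ2, λ3, λ4 are distinct positive reals. If λ1 > max{λ2, λ3, λ4}, then lim_{y→∞} P(X1 > y, X2 > y) / P(X1 > y) exists and is strictly positive. -/

import Mathlib

/-!
Write `X1 = λ1 R1 + V` and `min X1 X2 = λ1 R1 + W` with `V = λ2 R2 + λ3 R3 + λ4 R4` and
`W = λ2 R2 + min (λ3 R3 + λ4 R4) (λ3 R3' + λ4 R4')`, both independent of `R1`. Conditioning on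
`V`, `e^{y/λ1} P(λ1 R1 + V > y) = E[exp (min V y / λ1)]`, which increases to `E[e^{V/λ1}]` as
`y → ∞`. This is finite because `λ1` dominates the other weights, so that only the exponential
moments `E[e^{cR}]` with `c < 1` of a standard exponential `R` enter. Hence both tails decay like
`e^{-y/λ1}` and the ratio tends to `E[e^{W/λ1}] / E[e^{V/λ1}] > 0`.
-/

open MeasureTheory ProbabilityTheory Filter

/-- `R` is a standard exponential random variable under `μ`:
its survival function is `exp (-y)` for `y ≥ 0` and `1` for `y < 0`. -/
def IsStdExp {Ω : Type*} [MeasurableSpace Ω] (μ : Measure Ω) (R : Ω → ℝ) : Prop :=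
  Measurable R ∧ ∀ y : ℝ, μ {ω | y < R ω} = ENNReal.ofReal (Real.exp (-(max y 0)))

open Set Real Topology

theorem integrable_of_meas_lt_le_rpow {α : Type*} [MeasurableSpace α] {μ : Measure α}
    [IsFiniteMeasure μ] {f : α → ℝ} (hf0 : 0 ≤ᵐ[μ] f) (hf : AEStronglyMeasurable f μ) {p : ℝ}
    (hp : 1 < p) (htail : ∀ t > 1, μ {a | t < f a} ≤ ENNReal.ofReal (t ^ (-p))) :
    Integrable f μ := by
  rw [← lintegral_ofReal_ne_top_iff_integrable hf hf0,
    lintegral_eq_lintegral_meas_lt μ hf0 hf.aemeasurable, ← Ioc_union_Ioi_eq_Ioi zero_le_one,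
    lintegral_union measurableSet_Ioi (Ioc_disjoint_Ioi le_rfl)]
  refine ENNReal.add_ne_top.2 ⟨?_, ?_⟩
  · refine ne_top_of_le_ne_top ?_
      (setLIntegral_mono' measurableSet_Ioc fun t _ => measure_mono (subset_univ _))
    simp [measure_ne_top]
  · refine ne_top_of_le_ne_top ?_ (setLIntegral_mono' measurableSet_Ioi htail)
    exact (integrableOn_Ioi_rpow_of_lt (by linarith) zero_lt_one).lintegral_lt_top.ne

theorem ProbabilityTheory.IndepFun.measure_preimage_eq_lintegral {Ω β γ : Type*}
    [MeasurableSpace Ω] [MeasurableSpace β] [MeasurableSpace γ] {μ : Measure Ω}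
    [IsFiniteMeasure μ] {X : Ω → β} {Y : Ω → γ} (h : IndepFun X Y μ) (hX : Measurable X)
    (hY : Measurable Y) {s : Set (β × γ)} (hs : MeasurableSet s) :
    μ ((fun ω => (X ω, Y ω)) ⁻¹' s) = ∫⁻ ω, μ {ω' | (X ω, Y ω') ∈ s} ∂μ := by
  rw [← Measure.map_apply (hX.prodMk hY) hs,
    (indepFun_iff_map_prod_eq_prod_map_map hX.aemeasurable hY.aemeasurable).1 h,
    Measure.prod_apply hs, lintegral_map (measurable_measure_prodMk_left hs) hX]
  refine lintegral_congr fun ω => ?_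
  rw [Measure.map_apply hY (measurable_prodMk_left hs)]
  rfl

theorem ProbabilityTheory.iIndepFun.indepFun_zero_succ {Ω β : Type*} [MeasurableSpace Ω]
    [MeasurableSpace β] {μ : Measure Ω} {n : ℕ} {f : Fin (n + 1) → Ω → β} (h : iIndepFun f μ)
    (hf : ∀ i, Measurable (f i)) : IndepFun (f 0) (fun ω (i : Fin n) => f i.succ ω) μ :=
  (h.indepFun_finset {0} (Finset.univ.map (Fin.succEmb n)) (by simp [Fin.succ_ne_zero]) hf).comp
    (φ := fun v : ({0} : Finset (Fin (n + 1))) → β => v ⟨0, Finset.mem_singleton_self 0⟩)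
    (ψ := fun (v : Finset.univ.map (Fin.succEmb n) → β) (i : Fin n) => v ⟨i.succ, by simp⟩)
    (measurable_pi_apply _) (measurable_pi_lambda _ fun _ => measurable_pi_apply _)

namespace IsStdExp

variable {Ω : Type*} [MeasurableSpace Ω] {μ : Measure Ω} [IsFiniteMeasure μ] {R V : Ω → ℝ}

theorem integrable_exp_mul (hR : IsStdExp μ R) {c : ℝ} (hc0 : 0 < c) (hc1 : c < 1) :
    Integrable (fun ω => exp (c * R ω)) μ := by
  refine integrable_of_meas_lt_le_rpow (ae_of_all _ fun ω => (exp_pos _).le)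
    (hR.1.const_mul c).exp.aestronglyMeasurable (one_lt_inv_iff₀.2 ⟨hc0, hc1⟩) fun t ht => ?_
  have hlog : 0 < log t / c := div_pos (log_pos ht) hc0
  have hset : {ω | t < exp (c * R ω)} = {ω | log t / c < R ω} := by
    ext ω
    change t < exp (c * R ω) ↔ log t / c < R ω
    rw [div_lt_iff₀' hc0, log_lt_iff_lt_exp (by linarith)]
  rw [hset, hR.2, max_eq_left hlog.le, rpow_def_of_pos (by linarith)]
  apply le_of_eq
  congr 2
  field_simp

theorem measure_lt_mul_add_eq_integral (hR : IsStdExp μ R) (hV : Measurable V)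
    (hind : IndepFun R V μ) {a : ℝ} (ha : 0 < a) (y : ℝ) :
    (μ {ω | y < a * R ω + V ω}).toReal = ∫ ω, exp (-max ((y - V ω) / a) 0) ∂μ := by
  have hs : MeasurableSet {p : ℝ × ℝ | (y - p.1) / a < p.2} :=
    measurableSet_lt (by fun_prop) measurable_snd
  have hset : {ω | y < a * R ω + V ω} = (fun ω => (V ω, R ω)) ⁻¹' {p | (y - p.1) / a < p.2} := by
    ext ω
    change y < a * R ω + V ω ↔ (y - V ω) / a < R ω
    rw [div_lt_iff₀ ha, sub_lt_iff_lt_add, mul_comm]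
  rw [hset, hind.symm.measure_preimage_eq_lintegral hV hR.1 hs,
    integral_eq_lintegral_of_nonneg_ae (ae_of_all _ fun _ => (exp_pos _).le) (by fun_prop)]
  exact congrArg ENNReal.toReal (lintegral_congr fun ω => hR.2 ((y - V ω) / a))

theorem exp_mul_measure_lt_mul_add (hR : IsStdExp μ R) (hV : Measurable V)
    (hind : IndepFun R V μ) {a : ℝ} (ha : 0 < a) (y : ℝ) :
    exp (y / a) * (μ {ω | y < a * R ω + V ω}).toReal = ∫ ω, exp (min (V ω) y / a) ∂μ := by
  rw [hR.measure_lt_mul_add_eq_integral hV hind ha y, ← integral_const_mul]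
  refine integral_congr_ae (ae_of_all _ fun ω => ?_)
  dsimp only
  rw [← exp_add, ← sub_eq_add_neg]
  congr 1
  rcases le_total (V ω) y with h | h
  · rw [min_eq_left h, max_eq_left (div_nonneg (by linarith) ha.le)]
    ring
  · rw [min_eq_right h, max_eq_right (div_nonpos_of_nonpos_of_nonneg (by linarith) ha.le),
      sub_zero]

theorem tendsto_exp_mul_measure_lt_mul_add (hR : IsStdExp μ R) (hV : Measurable V)
    (hind : IndepFun R V μ) {a : ℝ} (ha : 0 < a) (hI : Integrable (fun ω => exp (V ω / a)) μ) :
    Tendsto (fun y => exp (y / a) * (μ {ω | y < a * R ω + V ω}).toReal) atTop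
      (𝓝 (∫ ω, exp (V ω / a) ∂μ)) := by
  simp_rw [hR.exp_mul_measure_lt_mul_add hV hind ha]
  refine tendsto_integral_filter_of_dominated_convergence _ (Eventually.of_forall fun y => by
    fun_prop) (Eventually.of_forall fun y => ae_of_all _ fun ω => ?_) hI (ae_of_all _ fun ω => ?_)
  · rw [Real.norm_of_nonneg (exp_pos _).le]
    exact exp_le_exp.2 (div_le_div_of_nonneg_right (min_le_left _ _) ha.le)
  · exact tendsto_const_nhds.congr' <| (eventually_ge_atTop (V ω)).mono fun y hy => by
      simp only [min_eq_left hy]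

theorem exists_pos_tendsto_measure_lt_mul_add_div {W : Ω → ℝ} [NeZero μ] (hR : IsStdExp μ R)
    (hV : Measurable V) (hW : Measurable W) (hindV : IndepFun R V μ) (hindW : IndepFun R W μ)
    {a : ℝ} (ha : 0 < a) (hWV : ∀ ω, W ω ≤ V ω) (hI : Integrable (fun ω => exp (V ω / a)) μ) :
    ∃ L : ℝ, 0 < L ∧ Tendsto (fun y =>
      (μ {ω | y < a * R ω + W ω}).toReal / (μ {ω | y < a * R ω + V ω}).toReal) atTop (𝓝 L) := by
  have hIW : Integrable (fun ω => exp (W ω / a)) μ := by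
    refine hI.mono' (by fun_prop) (ae_of_all _ fun ω => ?_)
    rw [Real.norm_of_nonneg (exp_pos _).le]
    exact exp_le_exp.2 (div_le_div_of_nonneg_right (hWV ω) ha.le)
  refine ⟨_, div_pos (integral_exp_pos hIW) (integral_exp_pos hI),
    ((hR.tendsto_exp_mul_measure_lt_mul_add hW hindW ha hIW).div
      (hR.tendsto_exp_mul_measure_lt_mul_add hV hindV ha hI)
      (integral_exp_pos hI).ne').congr fun y => ?_⟩
  exact mul_div_mul_left _ _ (exp_ne_zero _)

end IsStdExp

theorem ProbabilityTheory.iIndepFun.integrable_exp_sum_of_isStdExp {Ω ι : Type*}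
    [MeasurableSpace Ω] {μ : Measure Ω} [IsFiniteMeasure μ] {R : ι → Ω → ℝ}
    (hind : iIndepFun R μ) (hR : ∀ i, IsStdExp μ (R i)) {s : Finset ι} {c : ι → ℝ}
    (hc : ∀ i ∈ s, 0 < c i ∧ c i < 1) :
    Integrable (fun ω => exp (∑ i ∈ s, c i * R i ω)) μ := by
  have hind' : iIndepFun (fun i ω => c i * R i ω) μ :=
    hind.comp (fun i x => c i * x) fun i => by fun_prop
  simpa using hind'.integrable_exp_mul_sum (t := 1) (fun i => (hR i).1.const_mul (c i))
    fun i hi => by simpa using (hR i).integrable_exp_mul (hc i hi).1 (hc i hi).2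

theorem stmt_7_general {Ω : Type*} [MeasurableSpace Ω] (μ : Measure Ω) [IsProbabilityMeasure μ]
    (R : Fin 6 → Ω → ℝ) (hR : ∀ i, IsStdExp μ (R i))
    (hind : iIndepFun R μ)
    (l1 l2 l3 l4 : ℝ) (hpos : 0 < l1 ∧ 0 < l2 ∧ 0 < l3 ∧ 0 < l4)
    (X1 X2 : Ω → ℝ)
    (hX1 : ∀ ω, X1 ω = l1 * R 0 ω + l2 * R 1 ω + l3 * R 2 ω + l4 * R 3 ω)
    (hX2 : ∀ ω, X2 ω = l1 * R 0 ω + l2 * R 1 ω + l3 * R 4 ω + l4 * R 5 ω)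
    (hdom : max (max l2 l3) l4 < l1) :
    ∃ L : ℝ, 0 < L ∧
      Tendsto (fun y : ℝ =>
          (μ {ω | y < X1 ω ∧ y < X2 ω}).toReal / (μ {ω | y < X1 ω}).toReal)
        atTop (nhds L) := by
  obtain ⟨hl1, hl2, hl3, hl4⟩ := hpos
  obtain ⟨⟨hl21, hl31⟩, hl41⟩ : (l2 < l1 ∧ l3 < l1) ∧ l4 < l1 := by
    simpa only [max_lt_iff] using hdom
  have hRm : ∀ i, Measurable (R i) := fun i => (hR i).1
  set V : Ω → ℝ := fun ω => l2 * R 1 ω + l3 * R 2 ω + l4 * R 3 ω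
  set W : Ω → ℝ := fun ω => l2 * R 1 ω + min (l3 * R 2 ω + l4 * R 3 ω) (l3 * R 4 ω + l4 * R 5 ω)
  have hX1V : ∀ ω, X1 ω = l1 * R 0 ω + V ω := fun ω => by rw [hX1]; ring
  have hXW : ∀ ω, min (X1 ω) (X2 ω) = l1 * R 0 ω + W ω := fun ω => by
    rw [hX1, hX2, ← add_assoc, ← min_add_add_left]
    congr 1 <;> ring
  have hindV : IndepFun (R 0) V μ := (hind.indepFun_zero_succ hRm).comp measurable_id
    (ψ := fun x : Fin 5 → ℝ => l2 * x 0 + l3 * x 1 + l4 * x 2) (by fun_prop)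
  have hindW : IndepFun (R 0) W μ := (hind.indepFun_zero_succ hRm).comp measurable_id
    (ψ := fun x : Fin 5 → ℝ => l2 * x 0 + min (l3 * x 1 + l4 * x 2) (l3 * x 3 + l4 * x 4))
    (by fun_prop)
  have hVint : Integrable (fun ω => exp (V ω / l1)) μ := by
    convert hind.integrable_exp_sum_of_isStdExp hR (s := {1, 2, 3})
      (c := ![0, l2 / l1, l3 / l1, l4 / l1, 0, 0]) ?_ using 3 with ω
    · rw [Finset.sum_insert (by decide), Finset.sum_insert (by decide), Finset.sum_singleton]
      simp only [V, Matrix.cons_val]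
      field_simp
      ring
    · simp only [Finset.mem_insert, Finset.mem_singleton, forall_eq_or_imp, forall_eq]
      simp [div_lt_one, *]
  obtain ⟨L, hL, hT⟩ := (hR 0).exists_pos_tendsto_measure_lt_mul_add_div (by fun_prop)
    (by fun_prop) hindV hindW hl1 (fun ω => by grind) hVint
  refine ⟨L, hL, hT.congr fun y => ?_⟩
  simp only [← hXW, lt_min_iff, hX1V]

/-- X1, X2 share R1 (index 0) and R2 (index 1). If λ1 dominates, the pair is
asymptotically dependent: the conditional tail ratio has a strictly positive limit. -/
theorem stmt_7 {Ω : Type*} [MeasurableSpace Ω] (μ : Measure Ω) [IsProbabilityMeasure μ]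
    (R : Fin 6 → Ω → ℝ) (hR : ∀ i, IsStdExp μ (R i))
    (hind : iIndepFun R μ)
    (l1 l2 l3 l4 : ℝ) (hpos : 0 < l1 ∧ 0 < l2 ∧ 0 < l3 ∧ 0 < l4)
    (hdist : l1 ≠ l2 ∧ l1 ≠ l3 ∧ l1 ≠ l4 ∧ l2 ≠ l3 ∧ l2 ≠ l4 ∧ l3 ≠ l4)
    (X1 X2 : Ω → ℝ)
    (hX1 : ∀ ω, X1 ω = l1 * R 0 ω + l2 * R 1 ω + l3 * R 2 ω + l4 * R 3 ω)
    (hX2 : ∀ ω, X2 ω = l1 * R 0 ω + l2 * R 1 ω + l3 * R 4 ω + l4 * R 5 ω)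
    (hdom : max (max l2 l3) l4 < l1) :
    ∃ L : ℝ, 0 < L ∧
      Tendsto (fun y : ℝ =>
          (μ {ω | y < X1 ω ∧ y < X2 ω}).toReal / (μ {ω | y < X1 ω}).toReal)
        atTop (nhds L) :=
  stmt_7_general μ R hR hind l1 l2 l3 l4 hpos X1 X2 hX1 hX2 hdom
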